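/- arXiv:1206.5935 — 2 statements merged into one kernel-verified Lean document; each statement's English description precedes it below -/
import Mathlib

section
/- If S : ℝⁿ → ℝ^{n_c} is differentiable and the Casimir condition holds, i.e. [-∂Sᵀ/∂x I] · [[J−R, −G Gcᵀ],[Gc Gᵀ, Jc−Rc]] = 0 for all x, ξ, then transposing and combining the two block equations yields ∂Sᵀ/∂x (J−R) ∂S/∂x = Jc + Rc; separating symmetric and skew-symmetric parts gives Rc = −∂Sᵀ/∂x · R · ∂S/∂x and Jc = ∂Sᵀ/∂x · J · ∂S/∂x. -/
open Matrix
/-- Casimir conditions imply `Pᵀ(J−R)P = Jc + Rc`, and separating symmetric and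
skew-symmetric parts, `Rc = −Pᵀ R P` and `Jc = Pᵀ J P`, where `P = ∂S/∂x`. -/
theorem casimir_structure_relations {n nc m : ℕ}
    (J R : (Fin n → ℝ) → Matrix (Fin n) (Fin n) ℝ)
    (G : (Fin n → ℝ) → Matrix (Fin n) (Fin m) ℝ)
    (Jc Rc : (Fin nc → ℝ) → Matrix (Fin nc) (Fin nc) ℝ)
    (Gc : (Fin nc → ℝ) → Matrix (Fin nc) (Fin m) ℝ)
    (P : (Fin n → ℝ) → Matrix (Fin n) (Fin nc) ℝ)   -- the Jacobian ∂S/∂x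
    (hJ : ∀ x, (J x)ᵀ = -(J x)) (hR : ∀ x, (R x)ᵀ = R x)
    (hJc : ∀ ξ, (Jc ξ)ᵀ = -(Jc ξ)) (hRc : ∀ ξ, (Rc ξ)ᵀ = Rc ξ)
    (h1 : ∀ x ξ, (P x)ᵀ * (J x - R x) - Gc ξ * (G x)ᵀ = 0)
    (h2 : ∀ x ξ, (P x)ᵀ * (G x * (Gc ξ)ᵀ) + (Jc ξ - Rc ξ) = 0) :
    ∀ x ξ, (P x)ᵀ * (J x - R x) * P x = Jc ξ + Rc ξ ∧
      Rc ξ = -((P x)ᵀ * R x * P x) ∧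
      Jc ξ = (P x)ᵀ * J x * P x := by
  intro x ξ
  have e1 : (P x)ᵀ * (J x - R x) = Gc ξ * (G x)ᵀ := by
    have := h1 x ξ; linear_combination (norm := abel) this
  have e2 : (P x)ᵀ * (G x * (Gc ξ)ᵀ) = Rc ξ - Jc ξ := by
    have := h2 x ξ; linear_combination (norm := abel) this
  have e2t : Gc ξ * (G x)ᵀ * P x = Rc ξ + Jc ξ := by
    have h := congrArg Matrix.transpose e2
    simpa [Matrix.transpose_mul, Matrix.mul_assoc, hJc, hRc, sub_eq_add_neg,
      add_comm] using h
  have main : (P x)ᵀ * (J x - R x) * P x = Jc ξ + Rc ξ := by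
    rw [e1, e2t, add_comm]
  have ht : ((P x)ᵀ * (J x - R x) * P x)ᵀ = (Jc ξ + Rc ξ)ᵀ := congrArg _ main
  have ht' : (P x)ᵀ * (-(J x) - R x) * P x = -(Jc ξ) + Rc ξ := by
    simpa [Matrix.transpose_mul, Matrix.transpose_sub, hJ, hR, hJc, hRc,
      Matrix.mul_assoc] using ht
  have mA : (P x)ᵀ * J x * P x - (P x)ᵀ * R x * P x = Jc ξ + Rc ξ := by
    rw [← main]; rw [Matrix.mul_sub, Matrix.sub_mul]
  have mB : -((P x)ᵀ * J x * P x) - (P x)ᵀ * R x * P x = -(Jc ξ) + Rc ξ := by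
    rw [← ht']; rw [Matrix.mul_sub, Matrix.sub_mul, Matrix.mul_neg, Matrix.neg_mul]
  refine ⟨main, ?_, ?_⟩
  · ext i j
    have hA := congrFun (congrFun mA i) j
    have hB := congrFun (congrFun mB i) j
    simp only [Matrix.sub_apply, Matrix.add_apply, Matrix.neg_apply] at hA hB ⊢
    linarith
  · ext i j
    have hA := congrFun (congrFun mA i) j
    have hB := congrFun (congrFun mB i) j
    simp only [Matrix.sub_apply, Matrix.add_apply, Matrix.neg_apply] at hA hB ⊢
    linarith
end

section
/- Under the Casimir conditions, if additionally R(x) ⪰ 0 (positive semidefinite) and Rc(ξ) ⪰ 0, then necessarily R(x) ∂S/∂x(x) = 0 and Rc(ξ) = 0 (the dissipation obstacle). -/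
/-!
`Pᵀ R P` is positive semidefinite because `R` is, and negative semidefinite because
`Rc = -(Pᵀ R P)` is positive semidefinite, so it vanishes. Writing `R = Bᵀ B`, this says
`(B P)ᵀ (B P) = 0`, hence `B P = 0` and `R P = 0`; then `Rc = -(Pᵀ (R P)) = 0`.
-/

open Matrix

namespace Matrix.PosSemidef

open scoped ComplexOrder MatrixOrder

variable {𝕜 m n : Type*} [RCLike 𝕜] [Fintype n]

theorem conjTranspose_mul_mul_same_eq_zero_iff {A : Matrix n n 𝕜} (hA : A.PosSemidef)
    (M : Matrix n m 𝕜) : Mᴴ * A * M = 0 ↔ A * M = 0 := by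
  classical
  obtain ⟨B, rfl⟩ := CStarAlgebra.nonneg_iff_eq_star_mul_self.mp hA.nonneg
  rw [star_eq_conjTranspose, conjTranspose_mul_self_mul_eq_zero,
    show Mᴴ * (Bᴴ * B) * M = (B * M)ᴴ * (B * M) by simp only [conjTranspose_mul, Matrix.mul_assoc],
    conjTranspose_mul_self_eq_zero]

theorem mul_eq_zero_of_neg_conjTranspose_mul_mul_same [Fintype m] {A : Matrix n n 𝕜} (hA : A.PosSemidef)
    {M : Matrix n m 𝕜} (hneg : (-(Mᴴ * A * M)).PosSemidef) : A * M = 0 := by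
  have hzero : Mᴴ * A * M = 0 :=
    le_antisymm (neg_nonneg.mp hneg.nonneg) (hA.conjTranspose_mul_mul_same M).nonneg
  exact (hA.conjTranspose_mul_mul_same_eq_zero_iff M).mp hzero

end Matrix.PosSemidef

theorem dissipation_obstacle_general {n nc : ℕ}
    (R : (Fin n → ℝ) → Matrix (Fin n) (Fin n) ℝ)
    (Rc : (Fin nc → ℝ) → Matrix (Fin nc) (Fin nc) ℝ)
    (P : (Fin n → ℝ) → Matrix (Fin n) (Fin nc) ℝ)   -- the Jacobian ∂S/∂x
    (hRcrel : ∀ x ξ, Rc ξ = -((P x)ᵀ * R x * P x))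
    (hRpsd : ∀ x, (R x).PosSemidef)
    (hRcpsd : ∀ ξ, (Rc ξ).PosSemidef) :
    ∀ x ξ, R x * P x = 0 ∧ Rc ξ = 0 := by
  intro x ξ
  have hRP : R x * P x = 0 := by
    refine (hRpsd x).mul_eq_zero_of_neg_conjTranspose_mul_mul_same ?_
    rw [conjTranspose_eq_transpose_of_trivial, ← hRcrel x ξ]
    exact hRcpsd ξ
  refine ⟨hRP, ?_⟩
  rw [hRcrel x ξ, Matrix.mul_assoc, hRP, Matrix.mul_zero, neg_zero]

/-- The dissipation obstacle: under the Casimir relations, if both `R` and `Rc`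
are positive semidefinite then `R ∂S/∂x = 0` and `Rc = 0`. -/
theorem dissipation_obstacle {n nc : ℕ}
    (J R : (Fin n → ℝ) → Matrix (Fin n) (Fin n) ℝ)
    (Jc Rc : (Fin nc → ℝ) → Matrix (Fin nc) (Fin nc) ℝ)
    (P : (Fin n → ℝ) → Matrix (Fin n) (Fin nc) ℝ)   -- the Jacobian ∂S/∂x
    (hJ : ∀ x, (J x)ᵀ = -(J x)) (hR : ∀ x, (R x)ᵀ = R x)
    (hRcrel : ∀ x ξ, Rc ξ = -((P x)ᵀ * R x * P x))
    (hJcrel : ∀ x ξ, Jc ξ = (P x)ᵀ * J x * P x)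
    (hRpsd : ∀ x, (R x).PosSemidef)
    (hRcpsd : ∀ ξ, (Rc ξ).PosSemidef) :
    ∀ x ξ, R x * P x = 0 ∧ Rc ξ = 0 :=
  dissipation_obstacle_general R Rc P hRcrel hRpsd hRcpsd
end
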